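/- Let f* be an optimal randomized prediction rule for the DP-constrained fair classification problem with ε = 0: f* satisfies that Ŷ is statistically independent of S, and its risk E[1{Ŷ ≠ Y}] is minimal among all randomized prediction rules Q_{Ŷ|X,S} under which Ŷ is independent of S. Suppose Y = h(X, S) for a deterministic function h : 𝒳 × 𝒮 → 𝒴, and s_max ∈ 𝒮 satisfies P_S(s_max) > 1/2. Then for the prediction variable Ŷ induced by f*, for every s ∈ 𝒮: P_{Ŷ|S=s} = P_{Y|S=s_max}. -/

import Mathlib

/-!
Write `p_s = P_{Y|S=s}` and `q = P_Ŷ`. For a fair rule the joint law of `(Ŷ, S)` is `P_S ⊗ q`,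
so the accuracy conditional on `S = s` is at most `∑ y, min (p_s y) (q y) = 1 - TV(p_s, q)`:
every fair rule has risk at least `∑ s, P_S(s) TV(p_s, q)`. Conversely, when `Y = h(X, S)`,
transporting `p_s` to any target `r` along a maximal coupling gives a fair rule of risk exactly
`∑ s, P_S(s) TV(p_s, r)`. Comparing the optimal rule with the coupling rule for `r = p_{s_max}`
and using the triangle inequality for every `s ≠ s_max` yields
`(2 P_S(s_max) - 1) TV(p_{s_max}, q) ≤ 0`, so `q = p_{s_max}` once `P_S(s_max) > 1/2`.
-/

open Finset

noncomputable section

variable {𝒳 𝒴 𝒮 : Type*} [Fintype 𝒳] [Fintype 𝒴] [Fintype 𝒮] [DecidableEq 𝒴]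

/-- Total variation distance between two finitely supported distributions on `𝒴`,
`TV(p, q) = (1/2) ∑ y, |p y - q y|`. -/
def TV (p q : 𝒴 → ℝ) : ℝ := (1 / 2) * ∑ y, |p y - q y|

/-- Marginal distribution of the sensitive attribute `S` under the joint `P` of `(X, Y, S)`. -/
def margS (P : 𝒳 → 𝒴 → 𝒮 → ℝ) (s : 𝒮) : ℝ := ∑ x, ∑ y, P x y s

/-- Conditional distribution of the label `Y` given `S = s`. -/
def condYS (P : 𝒳 → 𝒴 → 𝒮 → ℝ) (s : 𝒮) (y : 𝒴) : ℝ := (∑ x, P x y s) / margS P s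

/-- A randomized prediction rule `Q`: for every `(x, s)`, `Q x s` is a probability
distribution on labels. -/
def IsRule (Q : 𝒳 → 𝒮 → 𝒴 → ℝ) : Prop :=
  (∀ x s y, 0 ≤ Q x s y) ∧ ∀ x s, ∑ y, Q x s y = 1

/-- The risk `E[1{Ŷ ≠ Y}]` of the rule `Q` under the joint distribution induced by `P` and
`Q` (in which `Ŷ` is conditionally independent of `Y` given `(X, S)`). -/
def risk (P : 𝒳 → 𝒴 → 𝒮 → ℝ) (Q : 𝒳 → 𝒮 → 𝒴 → ℝ) : ℝ :=
  ∑ x, ∑ y, ∑ s, ∑ yh, P x y s * Q x s yh * (if yh = y then (0 : ℝ) else 1)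

/-- Joint distribution of `(Ŷ, S)` induced by `P` and the rule `Q`. -/
def jointYhatS (P : 𝒳 → 𝒴 → 𝒮 → ℝ) (Q : 𝒳 → 𝒮 → 𝒴 → ℝ) (yh : 𝒴) (s : 𝒮) : ℝ :=
  ∑ x, ∑ y, P x y s * Q x s yh

/-- Marginal distribution of the prediction `Ŷ`. -/
def margYhat (P : 𝒳 → 𝒴 → 𝒮 → ℝ) (Q : 𝒳 → 𝒮 → 𝒴 → ℝ) (yh : 𝒴) : ℝ :=
  ∑ s, jointYhatS P Q yh s

/-- Conditional distribution of the prediction `Ŷ` given `S = s`. -/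
def condYhatS (P : 𝒳 → 𝒴 → 𝒮 → ℝ) (Q : 𝒳 → 𝒮 → 𝒴 → ℝ) (s : 𝒮) (yh : 𝒴) : ℝ :=
  jointYhatS P Q yh s / margS P s

/-- The prediction `Ŷ` induced by rule `Q` is statistically independent of `S`. -/
def IndepYhatS (P : 𝒳 → 𝒴 → 𝒮 → ℝ) (Q : 𝒳 → 𝒮 → 𝒴 → ℝ) : Prop :=
  ∀ s yh, condYhatS P Q s yh = margYhat P Q yh

section TotalVariation

variable {α : Type*} [Fintype α]

theorem TV_nonneg (p q : α → ℝ) : 0 ≤ TV p q :=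
  mul_nonneg (by norm_num) (sum_nonneg fun _ _ => abs_nonneg _)

theorem TV_self (p : α → ℝ) : TV p p = 0 := by
  simp [TV]

theorem TV_comm (p q : α → ℝ) : TV p q = TV q p := by
  simp only [TV, abs_sub_comm]

theorem TV_le_add (p q r : α → ℝ) : TV p r ≤ TV p q + TV q r := by
  rw [TV, TV, TV, ← mul_add, ← sum_add_distrib]
  gcongr with y
  exact abs_sub_le _ _ _

theorem eq_of_TV_eq_zero {p q : α → ℝ} (h : TV p q = 0) : p = q := by
  have hsum : ∑ y, |p y - q y| = 0 := by
    rw [TV] at h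
    linarith
  funext y
  have := (sum_eq_zero_iff_of_nonneg fun z _ => abs_nonneg (p z - q z)).mp hsum y (mem_univ y)
  exact sub_eq_zero.mp (abs_eq_zero.mp this)

theorem TV_eq_one_sub_sum_min {p q : α → ℝ} (hp : ∑ y, p y = 1) (hq : ∑ y, q y = 1) :
    TV p q = 1 - ∑ y, min (p y) (q y) := by
  have hmin : ∀ y, min (p y) (q y) = (p y + q y - |p y - q y|) / 2 := fun y => by
    rcases le_total (p y) (q y) with hy | hy
    · rw [min_eq_left hy, abs_of_nonpos (by linarith)]; ring
    · rw [min_eq_right hy, abs_of_nonneg (by linarith)]; ring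
  simp only [hmin, ← sum_div, sum_sub_distrib, sum_add_distrib, hp, hq, TV]
  ring

theorem TV_eq_zero_of_sum_mul_TV_le {ι : Type*} [Fintype ι] {w : ι → ℝ} (hw0 : ∀ i, 0 ≤ w i)
    (hw1 : ∑ i, w i = 1) {p : ι → α → ℝ} {j : ι} (hj : 1 / 2 < w j) {q : α → ℝ}
    (hle : ∑ i, w i * TV (p i) q ≤ ∑ i, w i * TV (p i) (p j)) : TV (p j) q = 0 := by
  set d := TV (p j) q
  have hterm : ∀ i ∈ univ, 0 ≤ w i * (TV (p i) q - TV (p i) (p j) + d) := fun i _ => by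
    have := TV_le_add (p i) q (p j)
    rw [TV_comm q] at this
    exact mul_nonneg (hw0 i) (by linarith)
  have hsingle := single_le_sum hterm (mem_univ j)
  have hexpand : ∑ i, w i * (TV (p i) q - TV (p i) (p j) + d)
      = ∑ i, w i * TV (p i) q - ∑ i, w i * TV (p i) (p j) + d := by
    simp only [mul_add, mul_sub, sum_add_distrib, sum_sub_distrib, ← sum_mul, hw1, one_mul]
  rw [TV_self, hexpand] at hsingle
  nlinarith [TV_nonneg (p j) q]

end TotalVariation

section MaximalCoupling

variable {α : Type*} [Fintype α]

theorem exists_normalized_excess {p r : α → ℝ} (hp1 : ∑ y, p y = 1) (hr0 : ∀ y, 0 ≤ r y)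
    (hr1 : ∑ y, r y = 1) :
    ∃ R : α → ℝ, (∀ z, 0 ≤ R z) ∧ ∑ z, R z = 1 ∧
      ∀ z, (∑ y, (p y - min (p y) (r y))) * R z = r z - min (p z) (r z) ∧
        (p z - min (p z) (r z)) * R z = 0 := by
  set D := ∑ y, (r y - min (p y) (r y))
  have hD : ∑ y, (p y - min (p y) (r y)) = D := by
    simp only [D, sum_sub_distrib, hp1, hr1]
  rw [hD]
  by_cases h : D = 0
  · have hmin : ∀ z, min (p z) (r z) = p z ∧ min (p z) (r z) = r z := fun z => by
      have hp := (sum_eq_zero_iff_of_nonneg fun y _ => sub_nonneg.mpr (min_le_left (p y) (r y))).mp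
        (hD.trans h) z (mem_univ z)
      have hr := (sum_eq_zero_iff_of_nonneg fun y _ => sub_nonneg.mpr (min_le_right (p y) (r y))).mp
        h z (mem_univ z)
      constructor <;> linarith
    exact ⟨r, hr0, hr1, fun z => ⟨by rw [h, zero_mul, (hmin z).2, sub_self],
      by rw [(hmin z).1, sub_self, zero_mul]⟩⟩
  · have hD0 : 0 ≤ D := sum_nonneg fun y _ => sub_nonneg.mpr (min_le_right _ _)
    refine ⟨fun z => (r z - min (p z) (r z)) / D,
      fun z => div_nonneg (sub_nonneg.mpr (min_le_right _ _)) hD0,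
      by rw [← sum_div, div_self h], fun z => ⟨mul_div_cancel₀ _ h, ?_⟩⟩
    rcases min_choice (p z) (r z) with hm | hm <;> simp [hm]

/-- Kernel of a maximal coupling of `p` and `r`: keep `y` with probability `min (p y) (r y) / p y`,
otherwise resample from the normalised excess `(r - p)⁺`. -/
theorem exists_kernel_maximal_coupling [DecidableEq α] {p r : α → ℝ} (hp0 : ∀ y, 0 ≤ p y)
    (hp1 : ∑ y, p y = 1) (hr0 : ∀ y, 0 ≤ r y) (hr1 : ∑ y, r y = 1) :
    ∃ K : α → α → ℝ, (∀ y z, 0 ≤ K y z) ∧ (∀ y, ∑ z, K y z = 1) ∧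
      (∀ z, ∑ y, p y * K y z = r z) ∧ ∑ y, p y * K y y = ∑ y, min (p y) (r y) := by
  obtain ⟨R, hR0, hR1, hR⟩ := exists_normalized_excess hp1 hr0 hr1
  set a : α → ℝ := fun y => min (p y) (r y) / p y
  have ha0 : ∀ y, 0 ≤ a y := fun y => div_nonneg (le_min (hp0 y) (hr0 y)) (hp0 y)
  have ha1 : ∀ y, a y ≤ 1 := fun y => div_le_one_of_le₀ (min_le_left _ _) (hp0 y)
  have hpa : ∀ y, p y * a y = min (p y) (r y) := fun y => by
    rcases (hp0 y).eq_or_lt with hy | hy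
    · simp [a, ← hy, min_eq_left (hr0 y)]
    · exact mul_div_cancel₀ _ hy.ne'
  set K : α → α → ℝ := fun y z => a y * (if z = y then 1 else 0) + (1 - a y) * R z
  have hpK : ∀ y z, p y * K y z
      = min (p y) (r y) * (if z = y then 1 else 0) + (p y - min (p y) (r y)) * R z := by
    intro y z
    simp only [K, ← hpa y]
    ring
  refine ⟨K, fun y z => ?_, fun y => ?_, fun z => ?_, sum_congr rfl fun y _ => ?_⟩
  · have := ha1 y
    have := hR0 z
    simp only [K]
    split_ifs <;> nlinarith [ha0 y]
  · simp [K, sum_add_distrib, ← mul_sum, hR1]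
  · simp only [hpK, sum_add_distrib, ← sum_mul, mul_ite, mul_one, mul_zero, sum_ite_eq, mem_univ,
      if_true, (hR z).1]
    ring
  · rw [hpK, if_pos rfl, mul_one, (hR y).2, add_zero]

end MaximalCoupling

theorem IsRule.le_one {X S Y : Type*} [Fintype Y] {Q : X → S → Y → ℝ} (hQ : IsRule Q)
    (x : X) (s : S) (y : Y) : Q x s y ≤ 1 :=
  hQ.2 x s ▸ single_le_sum (fun y' _ => hQ.1 x s y') (mem_univ y)

section Fairness

variable {X Y S : Type*} [Fintype X] [Fintype Y] {P : X → Y → S → ℝ}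

def accuracy [Fintype S] (P : X → Y → S → ℝ) (Q : X → S → Y → ℝ) : ℝ :=
  ∑ s, ∑ x, ∑ y, P x y s * Q x s y

theorem sum_margS [Fintype S] (hP1 : ∑ x, ∑ y, ∑ s, P x y s = 1) : ∑ s, margS P s = 1 := by
  simp only [margS]
  rw [sum_comm, ← hP1]
  exact sum_congr rfl fun x _ => sum_comm

theorem sum_eq_margS_mul_condYS {s : S} (hs : margS P s ≠ 0) (y : Y) :
    ∑ x, P x y s = margS P s * condYS P s y := by
  rw [condYS, mul_div_cancel₀ _ hs]

theorem condYS_nonneg (hP0 : ∀ x y s, 0 ≤ P x y s) (s : S) (y : Y) : 0 ≤ condYS P s y :=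
  div_nonneg (sum_nonneg fun x _ => hP0 x y s)
    (sum_nonneg fun x _ => sum_nonneg fun y _ => hP0 x y s)

theorem sum_condYS {s : S} (hs : margS P s ≠ 0) : ∑ y, condYS P s y = 1 := by
  simp only [condYS]
  rw [← sum_div, sum_comm]
  exact div_self hs

theorem sum_margYhat [Fintype S] (hP1 : ∑ x, ∑ y, ∑ s, P x y s = 1) {Q : X → S → Y → ℝ}
    (hQ : IsRule Q) : ∑ yh, margYhat P Q yh = 1 := by
  simp only [margYhat, jointYhatS]
  rw [sum_comm, ← sum_margS hP1]
  refine sum_congr rfl fun s _ => ?_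
  rw [sum_comm]
  refine sum_congr rfl fun x _ => ?_
  rw [sum_comm]
  simp only [← mul_sum, hQ.2, mul_one]

theorem jointYhatS_eq_of_indep [Fintype S] {Q : X → S → Y → ℝ} (hfair : IndepYhatS P Q) {s : S}
    (hs : margS P s ≠ 0) (yh : Y) : jointYhatS P Q yh s = margS P s * margYhat P Q yh := by
  rw [← hfair s yh, condYhatS, mul_div_cancel₀ _ hs]

theorem risk_eq_one_sub_accuracy [Fintype S] [DecidableEq Y] (hP1 : ∑ x, ∑ y, ∑ s, P x y s = 1)
    {Q : X → S → Y → ℝ} (hQ : IsRule Q) : risk P Q = 1 - accuracy P Q := by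
  have hinner : ∀ x y s, ∑ yh, P x y s * Q x s yh * (if yh = y then (0 : ℝ) else 1)
      = P x y s - P x y s * Q x s y := fun x y s => by
    have hsplit : ∀ yh, P x y s * Q x s yh * (if yh = y then (0 : ℝ) else 1)
        = P x y s * Q x s yh - if yh = y then P x y s * Q x s y else 0 := fun yh => by
      split_ifs with h <;> simp [h]
    rw [sum_congr rfl fun yh _ => hsplit yh, sum_sub_distrib, ← mul_sum, hQ.2, mul_one,
      sum_ite_eq' univ y, if_pos (mem_univ y)]
  simp only [risk, hinner, sum_sub_distrib, hP1, accuracy]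
  congr 1
  symm
  rw [sum_comm]
  exact sum_congr rfl fun x _ => sum_comm

theorem sum_margS_mul_TV_condYS [Fintype S] (hP1 : ∑ x, ∑ y, ∑ s, P x y s = 1)
    (hS : ∀ s, 0 < margS P s) {q : Y → ℝ} (hq : ∑ y, q y = 1) :
    ∑ s, margS P s * TV (condYS P s) q
      = 1 - ∑ s, margS P s * ∑ y, min (condYS P s y) (q y) := by
  simp only [TV_eq_one_sub_sum_min (sum_condYS (hS _).ne') hq, mul_sub, mul_one, sum_sub_distrib,
    sum_margS hP1]

theorem accuracy_le_of_indep [Fintype S] (hP0 : ∀ x y s, 0 ≤ P x y s) (hS : ∀ s, 0 < margS P s)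
    {Q : X → S → Y → ℝ} (hQ : IsRule Q) (hfair : IndepYhatS P Q) :
    accuracy P Q ≤ ∑ s, margS P s * ∑ y, min (condYS P s y) (margYhat P Q y) := by
  refine sum_le_sum fun s _ => ?_
  rw [sum_comm, mul_sum]
  refine sum_le_sum fun y _ => ?_
  rw [mul_min_of_nonneg _ _ (hS s).le, ← sum_eq_margS_mul_condYS (hS s).ne',
    ← jointYhatS_eq_of_indep hfair (hS s).ne', jointYhatS]
  refine le_min (sum_le_sum fun x _ => ?_) (sum_le_sum fun x _ => ?_)
  · exact mul_le_of_le_one_right (hP0 x y s) (hQ.le_one x s y)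
  · exact single_le_sum (fun y' _ => mul_nonneg (hP0 x y' s) (hQ.1 x s y)) (mem_univ y)

theorem sum_margS_mul_TV_le_risk [Fintype S] [DecidableEq Y] (hP0 : ∀ x y s, 0 ≤ P x y s)
    (hP1 : ∑ x, ∑ y, ∑ s, P x y s = 1) (hS : ∀ s, 0 < margS P s) {Q : X → S → Y → ℝ}
    (hQ : IsRule Q) (hfair : IndepYhatS P Q) :
    ∑ s, margS P s * TV (condYS P s) (margYhat P Q) ≤ risk P Q := by
  rw [sum_margS_mul_TV_condYS hP1 hS (sum_margYhat hP1 hQ), risk_eq_one_sub_accuracy hP1 hQ]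
  linarith [accuracy_le_of_indep hP0 hS hQ hfair]

theorem sum_sum_mul_comp_eq_of_det {h : X → S → Y} (hdet : ∀ x y s, y ≠ h x s → P x y s = 0)
    {s : S} (hs : margS P s ≠ 0) (F : Y → Y → ℝ) :
    ∑ x, ∑ y, P x y s * F y (h x s) = margS P s * ∑ y, condYS P s y * F y y := by
  have hdiag : ∀ x y, P x y s * F y (h x s) = P x y s * F y y := fun x y => by
    by_cases hy : y = h x s
    · rw [hy]
    · rw [hdet x y s hy, zero_mul, zero_mul]
  simp only [hdiag]
  rw [sum_comm, mul_sum]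
  refine sum_congr rfl fun y _ => ?_
  rw [← sum_mul, sum_eq_margS_mul_condYS hs, mul_assoc]

theorem exists_indep_rule_risk_eq [Fintype S] [DecidableEq Y] (hP0 : ∀ x y s, 0 ≤ P x y s)
    (hP1 : ∑ x, ∑ y, ∑ s, P x y s = 1) (hS : ∀ s, 0 < margS P s) {h : X → S → Y}
    (hdet : ∀ x y s, y ≠ h x s → P x y s = 0) {r : Y → ℝ} (hr0 : ∀ y, 0 ≤ r y)
    (hr1 : ∑ y, r y = 1) :
    ∃ Q, IsRule Q ∧ IndepYhatS P Q ∧ risk P Q = ∑ s, margS P s * TV (condYS P s) r := by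
  choose K hK0 hK1 hKmarg hKdiag using fun s =>
    exists_kernel_maximal_coupling (condYS_nonneg hP0 s) (sum_condYS (hS s).ne') hr0 hr1
  set Q : X → S → Y → ℝ := fun x s => K s (h x s)
  have hQ : IsRule Q := ⟨fun x s => hK0 s (h x s), fun x s => hK1 s (h x s)⟩
  have hjoint : ∀ yh s, jointYhatS P Q yh s = margS P s * r yh := fun yh s => by
    rw [jointYhatS, sum_sum_mul_comp_eq_of_det hdet (hS s).ne' fun _ z => K s z yh, hKmarg]
  have hmarg : ∀ yh, margYhat P Q yh = r yh := fun yh => by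
    rw [margYhat, sum_congr rfl fun s _ => hjoint yh s, ← sum_mul, sum_margS hP1, one_mul]
  refine ⟨Q, hQ, fun s yh => ?_, ?_⟩
  · rw [condYhatS, hjoint, hmarg, mul_div_cancel_left₀ _ (hS s).ne']
  · rw [risk_eq_one_sub_accuracy hP1 hQ, sum_margS_mul_TV_condYS hP1 hS hr1, accuracy]
    congr 1
    refine sum_congr rfl fun s _ => ?_
    rw [sum_sum_mul_comp_eq_of_det hdet (hS s).ne' fun y z => K s z y, hKdiag s]

end Fairness

/-- **Corollary (ε = 0 case).** If `Y = h(X, S)` is deterministic, `P_S(s_max) > 1/2`, and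
`Q` is an optimal randomized prediction rule among those with `Ŷ` independent of `S`, then
for every `s`, `P_{Ŷ|S=s} = P_{Y|S=s_max}`. -/
theorem dp_fair_optimal_inductive_bias_exact
    (P : 𝒳 → 𝒴 → 𝒮 → ℝ)
    (hP0 : ∀ x y s, 0 ≤ P x y s)
    (hP1 : ∑ x, ∑ y, ∑ s, P x y s = 1)
    (hS : ∀ s, 0 < margS P s)
    (h : 𝒳 → 𝒮 → 𝒴) (hdet : ∀ x y s, y ≠ h x s → P x y s = 0)
    (smax : 𝒮) (hsmax : 1 / 2 < margS P smax)
    (Q : 𝒳 → 𝒮 → 𝒴 → ℝ) (hQ : IsRule Q)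
    (hfair : IndepYhatS P Q)
    (hopt : ∀ Q' : 𝒳 → 𝒮 → 𝒴 → ℝ, IsRule Q' → IndepYhatS P Q' → risk P Q ≤ risk P Q') :
    ∀ s yh, condYhatS P Q s yh = condYS P smax yh := by
  obtain ⟨Q', hQ', hfair', hrisk'⟩ := exists_indep_rule_risk_eq hP0 hP1 hS hdet
    (condYS_nonneg hP0 smax) (sum_condYS (hS smax).ne')
  have hTV : TV (condYS P smax) (margYhat P Q) = 0 :=
    TV_eq_zero_of_sum_mul_TV_le (fun s => (hS s).le) (sum_margS hP1) hsmax
      ((sum_margS_mul_TV_le_risk hP0 hP1 hS hQ hfair).trans ((hopt Q' hQ' hfair').trans_eq hrisk'))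
  intro s yh
  rw [hfair s yh, eq_of_TV_eq_zero hTV]
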